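/- Let α ∈ ℝ \ ℚ and let U_α : L¹([0,1],m) → L¹([0,1],m) be given by (U_αf)(x) = e^{2πix}·f(x + α mod 1), where m is Lebesgue measure. Let f(x) = e^{2πix}. Then for every n ≥ 1 and every x ∈ [0,1], (U_αⁿf)(x) = e^{2πi·C(n+1,2)·α}·e^{2πi(n+1)x}, where C(n+1,2) = (n+1)n/2; consequently, for every x ∈ [0,1], taking the real polynomial p_x(y) = −((y+1)y/2)·α − (y+1)·x of degree 2, one has lim_{N→∞} (1/N)·Σ_{n=1}^N (U_αⁿf)(x)·e^{2πi·p_x(n)} = 1. In particular, the uniform polynomial Wiener–Wintner property fails for the strongly mixing spaCb operator U_α. -/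
import Mathlib


open Filter Topology

noncomputable section

/-- The operator `U_α` acting on functions, `(U_α g)(x) = e^{2πix}·g(x + α mod 1)`. -/
def Ualpha (α : ℝ) (g : ℝ → ℂ) : ℝ → ℂ :=
  fun x => Complex.exp (2 * (Real.pi : ℂ) * Complex.I * (x : ℂ)) * g (Int.fract (x + α))

/-- The exponential function `e(x) = e^{2πix}`. -/
def expFun : ℝ → ℂ :=
  fun x => Complex.exp (2 * (Real.pi : ℂ) * Complex.I * (x : ℂ))

lemma Ualpha_key (α : ℝ) : ∀ n : ℕ, ∀ x : ℝ,
    (Ualpha α)^[n] expFun x =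
      Complex.exp (2 * (Real.pi : ℂ) * Complex.I *
          ((((n : ℝ) + 1) * (n : ℝ) / 2 * α : ℝ) : ℂ)) *
        Complex.exp (2 * (Real.pi : ℂ) * Complex.I * ((((n : ℝ) + 1) * x : ℝ) : ℂ)) := by
  intro n
  induction n with
  | zero => intro x; simp [expFun]
  | succ n ih =>
    intro x
    rw [Function.iterate_succ_apply']
    show Complex.exp (2 * (Real.pi : ℂ) * Complex.I * (x : ℂ)) *
        (Ualpha α)^[n] expFun (Int.fract (x + α)) = _
    rw [ih]
    rw [← Complex.exp_add, ← Complex.exp_add, ← Complex.exp_add]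
    rw [Complex.exp_eq_exp_iff_exists_int]
    refine ⟨-(((n : ℤ) + 1) * ⌊x + α⌋), ?_⟩
    push_cast [Int.fract]
    ring

/-- **Failure of the uniform polynomial Wiener-Wintner property for `U_α`.** For irrational
`α` and `f(x) = e^{2πix}` one has, for all `n ≥ 1` and `x ∈ [0,1]`,
`(U_αⁿf)(x) = e^{2πi·((n+1)n/2)·α}·e^{2πi(n+1)x}`; consequently, for every `x ∈ [0,1]`, with
the degree-two real polynomial `p_x(y) = -((y+1)y/2)·α - (y+1)·x`, one has
`(1/N) ∑_{n=1}^N (U_αⁿf)(x)·e^{2πi·p_x(n)} → 1`. -/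
theorem skew_operator_polynomial_wiener_wintner_fails
    (α : ℝ) (hα : Irrational α) :
    (∀ n : ℕ, 1 ≤ n → ∀ x ∈ Set.Icc (0:ℝ) 1,
      (Ualpha α)^[n] expFun x =
        Complex.exp (2 * (Real.pi : ℂ) * Complex.I *
            ((((n : ℝ) + 1) * (n : ℝ) / 2 * α : ℝ) : ℂ)) *
          Complex.exp (2 * (Real.pi : ℂ) * Complex.I * ((((n : ℝ) + 1) * x : ℝ) : ℂ))) ∧
    (∀ x ∈ Set.Icc (0:ℝ) 1,
      Tendsto (fun N : ℕ => (N : ℂ)⁻¹ *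
          ∑ n ∈ Finset.Icc 1 N, (Ualpha α)^[n] expFun x *
            Complex.exp (2 * (Real.pi : ℂ) * Complex.I *
              ((-(((n : ℝ) + 1) * (n : ℝ) / 2 * α) - ((n : ℝ) + 1) * x : ℝ) : ℂ)))
        atTop (𝓝 1)) := by
  constructor
  · intro n _ x _
    exact Ualpha_key α n x
  · intro x _
    have hterm : ∀ n : ℕ, (Ualpha α)^[n] expFun x *
        Complex.exp (2 * (Real.pi : ℂ) * Complex.I *
          ((-(((n : ℝ) + 1) * (n : ℝ) / 2 * α) - ((n : ℝ) + 1) * x : ℝ) : ℂ)) = 1 := by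
      intro n
      rw [Ualpha_key α n x, mul_assoc, ← Complex.exp_add, ← Complex.exp_add]
      rw [← Complex.exp_zero]
      congr 1
      push_cast
      ring
    have heq : ∀ᶠ N : ℕ in atTop, (N : ℂ)⁻¹ *
        ∑ n ∈ Finset.Icc 1 N, (Ualpha α)^[n] expFun x *
          Complex.exp (2 * (Real.pi : ℂ) * Complex.I *
            ((-(((n : ℝ) + 1) * (n : ℝ) / 2 * α) - ((n : ℝ) + 1) * x : ℝ) : ℂ)) = 1 := by
      filter_upwards [eventually_ge_atTop 1] with N hN
      have : ∑ n ∈ Finset.Icc 1 N, (Ualpha α)^[n] expFun x *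
          Complex.exp (2 * (Real.pi : ℂ) * Complex.I *
            ((-(((n : ℝ) + 1) * (n : ℝ) / 2 * α) - ((n : ℝ) + 1) * x : ℝ) : ℂ)) = (N : ℂ) := by
        rw [Finset.sum_congr rfl (fun n _ => hterm n)]
        simp [Nat.card_Icc]
      rw [this]
      have hN0 : (N : ℂ) ≠ 0 := Nat.cast_ne_zero.mpr (by omega)
      exact inv_mul_cancel₀ hN0
    exact Tendsto.congr' (heq.mono fun N h => h.symm) tendsto_const_nhds
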